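/- arXiv:2105.03782 — 10 statements merged into one kernel-verified Lean document; each statement's English description precedes it below -/
import Mathlib

section
/- If two substrings s[i..i'] and s[j..j'] of a string s have periods p and q, respectively, and they overlap on at least p+q letters, namely min{i',j'} − max{i,j} > p + q, then the minimal period of their union s[min{i,j}..max{i',j'}] is at most gcd(p,q). -/
/-- `p` is a period of the substring `s[i..j]` (positions `i ≤ k ≤ j`):
`1 ≤ p ≤ j - i + 1` and `s[k] = s[k-p]` for all `i + p ≤ k ≤ j`. -/
def PeriodOf {α : Type*} (s : ℕ → α) (i j p : ℕ) : Prop :=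
  1 ≤ p ∧ p ≤ j - i + 1 ∧ ∀ k, i + p ≤ k → k ≤ j → s k = s (k - p)

/-- Fine–Wilf core: periods `p` and `q` with overlap `> p + q` force period `gcd p q`. -/
private lemma fineWilf_aux {α : Type*} (s : ℕ → α) :
    ∀ N p q a b, p + q ≤ N → 1 ≤ p → 1 ≤ q →
    (∀ k, a + p ≤ k → k ≤ b → s k = s (k - p)) →
    (∀ k, a + q ≤ k → k ≤ b → s k = s (k - q)) →
    a + p + q < b →
    ∀ k, a + Nat.gcd p q ≤ k → k ≤ b → s k = s (k - Nat.gcd p q) := by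
  intro N
  induction N with
  | zero => intro p q a b hN hp1 hq1; omega
  | succ N ih =>
    intro p q a b hN hp1 hq1 hp hq hov
    rcases lt_trichotomy p q with h | h | h
    · -- p < q : reduce q to q - p on [a, b - p]
      have hg : Nat.gcd p (q - p) = Nat.gcd p q := Nat.gcd_sub_self_right (le_of_lt h)
      have hgp : Nat.gcd p q ∣ p := Nat.gcd_dvd_left _ _
      have hgqp : Nat.gcd p q ∣ (q - p) := by rw [← hg]; exact Nat.gcd_dvd_right _ _
      have hgle : Nat.gcd p q ≤ q - p := Nat.le_of_dvd (by omega) hgqp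
      have hgle' : Nat.gcd p q ≤ p := Nat.le_of_dvd (by omega) hgp
      have per1 : ∀ k, a + (q - p) ≤ k → k ≤ b - p → s k = s (k - (q - p)) := by
        intro k h1 h2
        have e1 : s (k + p) = s k := by
          have := hp (k + p) (by omega) (by omega)
          rwa [Nat.add_sub_cancel] at this
        have e2 : s (k + p) = s (k + p - q) := hq (k + p) (by omega) (by omega)
        rw [← e1, e2]; congr 1; omega
      have per2 : ∀ k, a + p ≤ k → k ≤ b - p → s k = s (k - p) := by
        intro k h1 h2; exact hp k h1 (by omega)
      have inner := ih p (q - p) a (b - p) (by omega) hp1 (by omega) per2 per1 (by omega)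
      rw [hg] at inner
      intro k h1 h2
      by_cases hk : k ≤ b - p
      · exact inner k h1 hk
      · have e1 : s k = s (k - p) := hp k (by omega) h2
        have e2 : s (k - Nat.gcd p q) = s (k - Nat.gcd p q - p) :=
          hp (k - Nat.gcd p q) (by omega) (by omega)
        have e3 : s (k - p) = s (k - p - Nat.gcd p q) := inner (k - p) (by omega) (by omega)
        rw [e1, e3, e2]; congr 1; omega
    · -- p = q
      subst h
      intro k h1 h2
      have := hp k (by simpa [Nat.gcd_self] using h1) h2
      simpa [Nat.gcd_self] using this
    · -- q < p : reduce p to p - q on [a, b - q]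
      have hg : Nat.gcd (p - q) q = Nat.gcd p q := Nat.gcd_sub_self_left (le_of_lt h)
      have hgq : Nat.gcd p q ∣ q := Nat.gcd_dvd_right _ _
      have hgpq : Nat.gcd p q ∣ (p - q) := by rw [← hg]; exact Nat.gcd_dvd_left _ _
      have hgle : Nat.gcd p q ≤ p - q := Nat.le_of_dvd (by omega) hgpq
      have hgle' : Nat.gcd p q ≤ q := Nat.le_of_dvd (by omega) hgq
      have per1 : ∀ k, a + (p - q) ≤ k → k ≤ b - q → s k = s (k - (p - q)) := by
        intro k h1 h2
        have e1 : s (k + q) = s k := by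
          have := hq (k + q) (by omega) (by omega)
          rwa [Nat.add_sub_cancel] at this
        have e2 : s (k + q) = s (k + q - p) := hp (k + q) (by omega) (by omega)
        rw [← e1, e2]; congr 1; omega
      have per2 : ∀ k, a + q ≤ k → k ≤ b - q → s k = s (k - q) := by
        intro k h1 h2; exact hq k h1 (by omega)
      have inner := ih (p - q) q a (b - q) (by omega) (by omega) hq1 per1 per2 (by omega)
      rw [hg] at inner
      intro k h1 h2
      by_cases hk : k ≤ b - q
      · exact inner k h1 hk
      · have e1 : s k = s (k - q) := hq k (by omega) h2
        have e2 : s (k - Nat.gcd p q) = s (k - Nat.gcd p q - q) :=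
          hq (k - Nat.gcd p q) (by omega) (by omega)
        have e3 : s (k - q) = s (k - q - Nat.gcd p q) := inner (k - q) (by omega) (by omega)
        rw [e1, e3, e2]; congr 1; omega

/-- Extension: if `s[i..i']` has period `p` and a subwindow `[a, b]` of it of
length at least `p + g` has period `g`, then `s[i..i']` has period `g`. -/
private lemma extend_aux {α : Type*} (s : ℕ → α) (i i' a b p g : ℕ)
    (hp1 : 1 ≤ p) (hg1 : 1 ≤ g) (hia : i ≤ a) (hbi' : b ≤ i')
    (hlen : a + p + g ≤ b + 1)
    (hper : ∀ k, i + p ≤ k → k ≤ i' → s k = s (k - p))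
    (hovp : ∀ k, a + g ≤ k → k ≤ b → s k = s (k - g)) :
    ∀ k, i + g ≤ k → k ≤ i' → s k = s (k - g) := by
  -- Step A: period `g` on `[a, i']`, downward induction.
  have A : ∀ k, a + g ≤ k → k ≤ i' → s k = s (k - g) := by
    intro k
    induction k using Nat.strong_induction_on with
    | _ k ihk =>
      intro h1 h2
      by_cases hk : k ≤ b
      · exact hovp k h1 hk
      · have e1 : s k = s (k - p) := hper k (by omega) h2
        have e2 : s (k - g) = s (k - g - p) := hper (k - g) (by omega) (by omega)
        have e3 : s (k - p) = s (k - p - g) := ihk (k - p) (by omega) (by omega) (by omega)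
        rw [e1, e3, e2]; congr 1; omega
  -- Step B: upward induction to cover `[i, a]`.
  have B : ∀ m k, a + g - k ≤ m → i + g ≤ k → k ≤ i' → s k = s (k - g) := by
    intro m
    induction m with
    | zero =>
      intro k hm h1 h2
      exact A k (by omega) h2
    | succ m ihm =>
      intro k hm h1 h2
      by_cases hk : a + g ≤ k
      · exact A k hk h2
      · have e1 : s (k + p) = s k := by
          have := hper (k + p) (by omega) (by omega)
          rwa [Nat.add_sub_cancel] at this
        have e2 : s (k + p - g) = s (k - g) := by
          have := hper (k + p - g) (by omega) (by omega)
          rw [this]; congr 1; omega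
        have e3 : s (k + p) = s (k + p - g) := ihm (k + p) (by omega) (by omega) (by omega)
        rw [← e1, e3, e2]
  intro k h1 h2
  exact B (a + g - k) k le_rfl h1 h2

/-- Fine–Wilf: if `s[i..i']` has period `p`, `s[j..j']` has period `q`, and the
substrings overlap on more than `p + q` letters, then their union
`s[min i j..max i' j']` has a period at most `gcd p q` (in particular its minimal
period is at most `gcd p q`). -/
theorem stmt1 {α : Type*} (s : ℕ → α) (n i i' j j' p q : ℕ)
    (hii' : i ≤ i') (hjj' : j ≤ j') (hi'n : i' < n) (hj'n : j' < n)
    (hp : PeriodOf s i i' p) (hq : PeriodOf s j j' q)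
    (hov : max i j + p + q < min i' j') :
    ∃ r, r ≤ Nat.gcd p q ∧ PeriodOf s (min i j) (max i' j') r := by
  obtain ⟨hp1, hp2, hp3⟩ := hp
  obtain ⟨hq1, hq2, hq3⟩ := hq
  set a := max i j with ha
  set b := min i' j' with hb
  set g := Nat.gcd p q with hg
  have hg1 : 1 ≤ g := Nat.gcd_pos_of_pos_left q hp1
  have hgp : g ≤ p := Nat.le_of_dvd (by omega) (Nat.gcd_dvd_left _ _)
  have hgq : g ≤ q := Nat.le_of_dvd (by omega) (Nat.gcd_dvd_right _ _)
  -- Periods p and q on the overlap [a, b].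
  have hpab : ∀ k, a + p ≤ k → k ≤ b → s k = s (k - p) := by
    intro k h1 h2; exact hp3 k (by omega) (by omega)
  have hqab : ∀ k, a + q ≤ k → k ≤ b → s k = s (k - q) := by
    intro k h1 h2; exact hq3 k (by omega) (by omega)
  -- gcd period on the overlap.
  have hgab : ∀ k, a + g ≤ k → k ≤ b → s k = s (k - g) :=
    fineWilf_aux s (p + q) p q a b le_rfl hp1 hq1 hpab hqab hov
  -- Extend to each substring.
  have hgi : ∀ k, i + g ≤ k → k ≤ i' → s k = s (k - g) :=
    extend_aux s i i' a b p g hp1 hg1 (le_max_left _ _) (by omega) (by omega) hp3 hgab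
  have hgj : ∀ k, j + g ≤ k → k ≤ j' → s k = s (k - g) :=
    extend_aux s j j' a b q g hq1 hg1 (le_max_right _ _) (by omega) (by omega) hq3 hgab
  refine ⟨g, le_rfl, hg1, by omega, ?_⟩
  intro k h1 h2
  by_cases hki : i + g ≤ k ∧ k ≤ i'
  · exact hgi k hki.1 hki.2
  · have hkj : j + g ≤ k ∧ k ≤ j' := by omega
    exact hgj k hkj.1 hkj.2
end

section
/- Let s be a string of length n and let τ, τ' be integers with 4 ≤ τ ≤ τ' ≤ n/2. Then every τ-partitioning set of s is also a τ'-partitioning set of s. -/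
/-- `S ⊆ [0..n)` is a `τ`-partitioning set of the string `s[0..n)`. -/
def IsPartitioning {α : Type*} (s : ℕ → α) (n τ : ℕ) (S : Set ℕ) : Prop :=
  (∀ i ∈ S, i < n) ∧
  -- (a) local consistency
  (∀ i j, τ ≤ i → i + τ < n → τ ≤ j → j + τ < n →
      (∀ d, d ≤ 2 * τ → s (i - τ + d) = s (j - τ + d)) → (i ∈ S ↔ j ∈ S)) ∧
  -- (b) forward synchronization
  (∀ i j ℓ, i ∈ S → j ∈ S → i + ℓ < n → j + ℓ < n →
      (∀ d, d ≤ ℓ → s (i + d) = s (j + d)) →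
      ∀ d, d < ℓ - τ → (i + d ∈ S ↔ j + d ∈ S)) ∧
  -- (c) density
  (∀ i j, i ∈ S → j ∈ S → τ < j - i → (∀ h, i < h → h < j → h ∉ S) →
      ∃ p, p ≤ τ / 4 ∧ PeriodOf s i j p)

/-- Monotonicity: for `4 ≤ τ ≤ τ' ≤ n/2`, every `τ`-partitioning set is also
`τ'`-partitioning. -/
theorem stmt2 {α : Type*} (s : ℕ → α) (n τ τ' : ℕ) (S : Set ℕ)
    (h4 : 4 ≤ τ) (hττ' : τ ≤ τ') (hn : 2 * τ' ≤ n)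
    (hS : IsPartitioning s n τ S) :
    IsPartitioning s n τ' S := by
  obtain ⟨h0, ha, hb, hc⟩ := hS
  refine ⟨h0, ?_, ?_, ?_⟩
  · intro i j hi hin hj hjn hmatch
    refine ha i j (le_trans hττ' hi) (by omega) (le_trans hττ' hj) (by omega) ?_
    intro d hd
    have h1 : i - τ + d = i - τ' + ((τ' - τ) + d) := by omega
    have h2 : j - τ + d = j - τ' + ((τ' - τ) + d) := by omega
    rw [h1, h2]
    exact hmatch _ (by omega)
  · intro i j ℓ hiS hjS hin hjn hmatch d hd
    exact hb i j ℓ hiS hjS hin hjn hmatch d (by omega)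
  · intro i j hiS hjS hij hbetween
    obtain ⟨p, hp, hper⟩ := hc i j hiS hjS (by omega) hbetween
    exact ⟨p, le_trans hp (Nat.div_le_div_right hττ'), hper⟩
end

section
/- Let u ≥ 1 and let a_1, a_2, …, a_m be a sequence of integers with 0 ≤ a_i < 2^u for all i and a_i ≠ a_{i+1} for all i ∈ [1..m). Define b_i = vbit(a_i, a_{i+1}) for i ∈ [1..m). Then b_i ≠ b_{i+1} for all i ∈ [1..m−1), and 0 ≤ b_i < 2u for all i ∈ [1..m). -/
/-!
`vbit x y` records the position `k = lbit x y` of the lowest differing bit together with the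
bit of `x` there. If `vbit x y = vbit y z`, then both record the same position `k` and `x`, `y`
carry the same bit at `k`, contradicting the choice of `k` for the pair `x ≠ y`. The bound comes
from `2 ^ lbit x y ∣ x ^^^ y < 2 ^ u`.
-/

/-- `lbit x y`: index of the lowest bit in which the binary representations of
`x` and `y` differ (meaningful when `x ≠ y`); it is the 2-adic valuation of `x XOR y`. -/
def lbit (x y : ℕ) : ℕ := padicValNat 2 (x ^^^ y)

/-- `vbit x y = 2 * lbit x y + a` where `a` is the bit of `x` with index `lbit x y`. -/
def vbit (x y : ℕ) : ℕ := 2 * lbit x y + (if x.testBit (lbit x y) then 1 else 0)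

namespace Nat

theorem testBit_padicValNat_two {n : ℕ} (hn : n ≠ 0) : n.testBit (padicValNat 2 n) = true := by
  obtain ⟨k, m, hm, rfl⟩ := exists_eq_two_pow_mul_odd hn
  have hm0 : m ≠ 0 := by rintro rfl; simp at hm
  have hv : padicValNat 2 (2 ^ k * m) = k := by
    rw [padicValNat.mul (by positivity) hm0, padicValNat.prime_pow,
      padicValNat.eq_zero_of_not_dvd hm.not_two_dvd_nat, add_zero]
  simpa [hv, testBit_two_pow_mul, testBit_zero] using odd_iff.mp hm

theorem padicValNat_two_lt_of_lt_two_pow {n u : ℕ} (hn : n ≠ 0) (h : n < 2 ^ u) :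
    padicValNat 2 n < u :=
  (Nat.pow_lt_pow_iff_right (by norm_num)).mp <|
    (Nat.le_of_dvd (Nat.pos_of_ne_zero hn) pow_padicValNat_dvd).trans_lt h

end Nat

theorem testBit_lbit_ne {x y : ℕ} (h : x ≠ y) : x.testBit (lbit x y) ≠ y.testBit (lbit x y) := by
  have := Nat.testBit_padicValNat_two (Nat.xor_ne_zero_iff.mpr h)
  rw [Nat.testBit_xor] at this
  simpa [lbit] using this

theorem lbit_lt {x y u : ℕ} (hx : x < 2 ^ u) (hy : y < 2 ^ u) (h : x ≠ y) : lbit x y < u :=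
  Nat.padicValNat_two_lt_of_lt_two_pow (Nat.xor_ne_zero_iff.mpr h) (Nat.xor_lt_two_pow hx hy)

theorem vbit_lt {x y u : ℕ} (hx : x < 2 ^ u) (hy : y < 2 ^ u) (h : x ≠ y) :
    vbit x y < 2 * u := by
  have := lbit_lt hx hy h
  unfold vbit
  split_ifs <;> omega

theorem vbit_ne_vbit {x y : ℕ} (hxy : x ≠ y) (z : ℕ) : vbit x y ≠ vbit y z := by
  intro h
  obtain ⟨hk, hb⟩ : lbit x y = lbit y z ∧ x.testBit (lbit x y) = y.testBit (lbit y z) := by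
    unfold vbit at h
    split_ifs at h <;> simp_all <;> omega
  exact testBit_lbit_ne hxy (hk ▸ hb)

theorem stmt3_general (u m : ℕ) (a : ℕ → ℕ)
    (hbound : ∀ i, 1 ≤ i → i ≤ m → a i < 2 ^ u)
    (hadj : ∀ i, 1 ≤ i → i < m → a i ≠ a (i + 1)) :
    (∀ i, 1 ≤ i → i + 1 < m →
        vbit (a i) (a (i + 1)) ≠ vbit (a (i + 1)) (a (i + 2))) ∧
    (∀ i, 1 ≤ i → i < m → vbit (a i) (a (i + 1)) < 2 * u) :=
  ⟨fun i hi him => vbit_ne_vbit (hadj i hi (by omega)) _,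
    fun i hi him => vbit_lt (hbound i hi him.le) (hbound (i + 1) (by omega) him) (hadj i hi him)⟩

/-- Cole–Vishkin bit reduction: if `a₁, …, a_m ∈ [0..2^u)` with adjacent elements
distinct, then `b_i = vbit (a_i) (a_{i+1})` (for `i ∈ [1..m)`) has adjacent elements
distinct and `b_i ∈ [0..2u)`. -/
theorem stmt3 (u m : ℕ) (hu : 1 ≤ u) (a : ℕ → ℕ)
    (hbound : ∀ i, 1 ≤ i → i ≤ m → a i < 2 ^ u)
    (hadj : ∀ i, 1 ≤ i → i < m → a i ≠ a (i + 1)) :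
    (∀ i, 1 ≤ i → i + 1 < m →
        vbit (a i) (a (i + 1)) ≠ vbit (a (i + 1)) (a (i + 2))) ∧
    (∀ i, 1 ≤ i → i < m → vbit (a i) (a (i + 1)) < 2 * u) :=
  stmt3_general u m a hbound hadj
end

section
/- Let s be a string of length n, let τ be a positive multiple of 8 with τ ≤ n/2, and let S be a (τ/2)-partitioning set of s. Define S' to be the set S from which we exclude all positions h ∈ S for which there exist i, j ∈ S with i < h ≤ j, j − i ≤ τ/4, j + τ/2 < n, i + τ/2 < n, and s[i..i+τ/2] = s[j..j+τ/2]. Then S' is a τ-partitioning set of s. -/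
/-- Position `h` is excluded from `S` in the construction of `S'`: there are
`i, j ∈ S` with `i < h ≤ j`, `j - i ≤ τ/4`, and `s[i..i+τ/2] = s[j..j+τ/2]`. -/
def Removed {α : Type*} (s : ℕ → α) (n τ : ℕ) (S : Set ℕ) (h : ℕ) : Prop :=
  ∃ i j, i ∈ S ∧ j ∈ S ∧ i < h ∧ h ≤ j ∧ j - i ≤ τ / 4 ∧
    i + τ / 2 < n ∧ j + τ / 2 < n ∧ ∀ d, d ≤ τ / 2 → s (i + d) = s (j + d)

/-- The refined set `S' ⊆ S`. -/
def Refine {α : Type*} (s : ℕ → α) (n τ : ℕ) (S : Set ℕ) : Set ℕ :=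
  {h ∈ S | ¬ Removed s n τ S h}

/-- Transfer of `Removed` along a matching window of radius `τ` (for condition (a)). -/
lemma removed_shift_a {α : Type*} (s : ℕ → α) (n τ : ℕ) (S : Set ℕ) (m : ℕ)
    (hm : τ = 8 * m) (hm1 : 1 ≤ m)
    (hSa : ∀ i j, τ/2 ≤ i → i + τ/2 < n → τ/2 ≤ j → j + τ/2 < n →
      (∀ d, d ≤ 2 * (τ/2) → s (i - τ/2 + d) = s (j - τ/2 + d)) → (i ∈ S ↔ j ∈ S))
    (i j : ℕ) (hi1 : τ ≤ i) (hi2 : i + τ < n) (hj1 : τ ≤ j) (hj2 : j + τ < n)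
    (W : ∀ d, d ≤ 2*τ → s (i - τ + d) = s (j - τ + d))
    (hR : Removed s n τ S i) : Removed s n τ S j := by
  obtain ⟨a, b, haS, hbS, hai, hib, hba, han, hbn, M⟩ := hR
  have haS' : (j - (i - a)) ∈ S := by
    refine (hSa a (j - (i - a)) (by omega) (by omega) (by omega) (by omega) ?_).mp haS
    intro d hd
    have e1 : a - τ/2 + d = i - τ + (a + τ - τ/2 + d - i) := by omega
    have e2 : j - (i - a) - τ/2 + d = j - τ + (a + τ - τ/2 + d - i) := by omega
    rw [e1, e2]
    exact W _ (by omega)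
  have hbS' : (j + (b - i)) ∈ S := by
    refine (hSa b (j + (b - i)) (by omega) (by omega) (by omega) (by omega) ?_).mp hbS
    intro d hd
    have e1 : b - τ/2 + d = i - τ + (b + τ - τ/2 + d - i) := by omega
    have e2 : j + (b - i) - τ/2 + d = j - τ + (b + τ - τ/2 + d - i) := by omega
    rw [e1, e2]
    exact W _ (by omega)
  refine ⟨j - (i - a), j + (b - i), haS', hbS', by omega, by omega, by omega,
    by omega, by omega, ?_⟩
  intro d hd
  have t1 : s (j - (i - a) + d) = s (a + d) := by
    have e1 : j - (i - a) + d = j - τ + (a + τ + d - i) := by omega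
    have e2 : a + d = i - τ + (a + τ + d - i) := by omega
    rw [e1, e2]
    exact (W _ (by omega)).symm
  have t2 : s (j + (b - i) + d) = s (b + d) := by
    have e1 : j + (b - i) + d = j - τ + (b + τ + d - i) := by omega
    have e2 : b + d = i - τ + (b + τ + d - i) := by omega
    rw [e1, e2]
    exact (W _ (by omega)).symm
  rw [t1, t2]
  exact M d hd

/-- Transfer of `Removed` along a long common extension (for condition (b)). -/
lemma removed_shift_b {α : Type*} (s : ℕ → α) (n τ : ℕ) (S : Set ℕ) (m : ℕ)
    (hm : τ = 8 * m) (hm1 : 1 ≤ m)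
    (hSb : ∀ i j ℓ, i ∈ S → j ∈ S → i + ℓ < n → j + ℓ < n →
      (∀ d, d ≤ ℓ → s (i + d) = s (j + d)) →
      ∀ d, d < ℓ - τ/2 → (i + d ∈ S ↔ j + d ∈ S))
    (i j ℓ : ℕ) (hiS : i ∈ S) (hjS : j ∈ S) (hiR : ¬ Removed s n τ S i)
    (hil : i + ℓ < n) (hjl : j + ℓ < n)
    (M : ∀ d, d ≤ ℓ → s (i + d) = s (j + d))
    (d : ℕ) (hd : d < ℓ - τ)
    (hR : Removed s n τ S (i + d)) : Removed s n τ S (j + d) := by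
  obtain ⟨a, b, haS, hbS, hai, hib, hba, han, hbn, M2⟩ := hR
  have hai' : i ≤ a := by
    by_contra hc
    exact hiR ⟨a, b, haS, hbS, by omega, by omega, hba, han, hbn, M2⟩
  have haS' : j + (a - i) ∈ S := by
    have h := hSb i j ℓ hiS hjS hil hjl M (a - i) (by omega)
    rw [show i + (a - i) = a by omega] at h
    exact h.mp haS
  have hbS' : j + (b - i) ∈ S := by
    have h := hSb i j ℓ hiS hjS hil hjl M (b - i) (by omega)
    rw [show i + (b - i) = b by omega] at h
    exact h.mp hbS
  refine ⟨j + (a - i), j + (b - i), haS', hbS', by omega, by omega, by omega,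
    by omega, by omega, ?_⟩
  intro d2 hd2
  have t1 : s (j + (a - i) + d2) = s (a + d2) := by
    have := M (a - i + d2) (by omega)
    rw [show i + (a - i + d2) = a + d2 by omega] at this
    rw [show j + (a - i) + d2 = j + (a - i + d2) by omega]
    exact this.symm
  have t2 : s (j + (b - i) + d2) = s (b + d2) := by
    have := M (b - i + d2) (by omega)
    rw [show i + (b - i + d2) = b + d2 by omega] at this
    rw [show j + (b - i) + d2 = j + (b - i + d2) by omega]
    exact this.symm
  rw [t1, t2]
  exact M2 d2 hd2

/-- If `τ` is a positive multiple of `8` with `τ ≤ n/2` and `S` is a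
`(τ/2)`-partitioning set of `s`, then the refined set `S'` is `τ`-partitioning. -/
theorem stmt6 {α : Type*} (s : ℕ → α) (n τ : ℕ) (S : Set ℕ)
    (hpos : 0 < τ) (hmul : τ % 8 = 0) (hn : 2 * τ ≤ n)
    (hS : IsPartitioning s n (τ / 2) S) :
    IsPartitioning s n τ (Refine s n τ S) := by
  classical
  obtain ⟨m, hm⟩ : ∃ m, τ = 8 * m := ⟨τ / 8, by omega⟩
  have hm1 : 1 ≤ m := by omega
  obtain ⟨hS0, hSa, hSb, hSc⟩ := hS
  have hmem : ∀ x, x ∈ Refine s n τ S ↔ (x ∈ S ∧ ¬ Removed s n τ S x) :=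
    fun x => Iff.rfl
  refine ⟨?_, ?_, ?_, ?_⟩
  · -- boundedness
    intro x hx
    exact hS0 x ((hmem x).mp hx).1
  · -- (a) local consistency
    intro i j hi1 hi2 hj1 hj2 W
    have W' : ∀ d, d ≤ 2*τ → s (j - τ + d) = s (i - τ + d) := fun d hd => (W d hd).symm
    have hSiff : i ∈ S ↔ j ∈ S := by
      refine hSa i j (by omega) (by omega) (by omega) (by omega) ?_
      intro d hd
      have e1 : i - τ/2 + d = i - τ + (τ - τ/2 + d) := by omega
      have e2 : j - τ/2 + d = j - τ + (τ - τ/2 + d) := by omega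
      rw [e1, e2]
      exact W _ (by omega)
    rw [hmem i, hmem j]
    constructor
    · rintro ⟨hiS, hiR⟩
      exact ⟨hSiff.mp hiS,
        fun hR => hiR (removed_shift_a s n τ S m hm hm1 hSa j i hj1 hj2 hi1 hi2 W' hR)⟩
    · rintro ⟨hjS, hjR⟩
      exact ⟨hSiff.mpr hjS,
        fun hR => hjR (removed_shift_a s n τ S m hm hm1 hSa i j hi1 hi2 hj1 hj2 W hR)⟩
  · -- (b) forward synchronization
    intro i j ℓ hi hj hil hjl M d hd
    rw [hmem i] at hi
    rw [hmem j] at hj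
    obtain ⟨hiS, hiR⟩ := hi
    obtain ⟨hjS, hjR⟩ := hj
    have M' : ∀ e, e ≤ ℓ → s (j + e) = s (i + e) := fun e he => (M e he).symm
    have hSpart : i + d ∈ S ↔ j + d ∈ S := hSb i j ℓ hiS hjS hil hjl M d (by omega)
    rw [hmem (i + d), hmem (j + d)]
    constructor
    · rintro ⟨h1, h2⟩
      exact ⟨hSpart.mp h1,
        fun hR => h2 (removed_shift_b s n τ S m hm hm1 hSb j i ℓ hjS hiS hjR hjl hil M' d hd hR)⟩
    · rintro ⟨h1, h2⟩
      exact ⟨hSpart.mpr h1,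
        fun hR => h2 (removed_shift_b s n τ S m hm hm1 hSb i j ℓ hiS hjS hiR hil hjl M d hd hR)⟩
  · -- (c) density
    intro i j hi hj hij hno
    rw [hmem i] at hi
    rw [hmem j] at hj
    obtain ⟨hiS, hiR⟩ := hi
    obtain ⟨hjS, hjR⟩ := hj
    have hrem : ∀ h, i < h → h < j → h ∈ S → Removed s n τ S h := by
      intro h h1 h2 hh
      by_contra hc
      exact hno h h1 h2 ((hmem h).mpr ⟨hh, hc⟩)
    by_cases hmid : ∃ h, i < h ∧ h < j ∧ h ∈ S
    · -- there is an (automatically removed) element of S strictly inside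
      have hh1S' := Nat.find_spec hmid
      obtain ⟨hh1i, hh1j, hh1S⟩ := hh1S'
      have hmin1 : ∀ x, x < Nat.find hmid → ¬(i < x ∧ x < j ∧ x ∈ S) :=
        fun x hx => Nat.find_min hmid hx
      obtain ⟨a, b, haS, hbS, hab1, hab2, hab3, han, hbn, M1⟩ :=
        hrem (Nat.find hmid) hh1i hh1j hh1S
      have hai : i ≤ a := by
        by_contra hc
        exact hiR ⟨a, b, haS, hbS, by omega, by omega, hab3, han, hbn, M1⟩
      have hae : a = i := by
        rcases Nat.lt_or_ge i a with hlt | hge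
        · exact absurd ⟨hlt, by omega, haS⟩ (hmin1 a hab1)
        · omega
      set p := b - a with hp
      have hp1 : 1 ≤ p := by omega
      have hp2 : p ≤ τ / 4 := hab3
      -- the witness gives period p on [i, i+p+τ/2]
      have perW : ∀ k, i + p ≤ k → k ≤ i + p + τ/2 → s k = s (k - p) := by
        intro k hk1 hk2
        have h := (M1 (k - b) (show k - b ≤ τ/2 by omega)).symm
        rw [show b + (k - b) = k by omega, show a + (k - b) = k - p by omega] at h
        exact h
      by_cases hbk : ∃ k, i + p ≤ k ∧ k ≤ j ∧ s k ≠ s (k - p)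
      · -- a breakpoint exists: derive a contradiction
        exfalso
        obtain ⟨hk01, hk02, hk03⟩ := Nat.find_spec hbk
        set k0 := Nat.find hbk with hk0def
        have perE : ∀ k, i + p ≤ k → k < k0 → s k = s (k - p) := by
          intro k h1 h2
          by_contra hc
          exact Nat.find_min hbk h2 ⟨h1, by omega, hc⟩
        have hk0big : i + p + τ/2 < k0 := by
          by_contra hc
          exact hk03 (perW k0 hk01 (by omega))
        -- g = last element of S at distance ≥ τ/2+1 before the breakpoint
        set g := Nat.findGreatest (fun x => x ∈ S) (k0 - 1 - τ/2) with hgdef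
        have hgS : g ∈ S := Nat.findGreatest_spec (show i ≤ k0 - 1 - τ/2 by omega) hiS
        have hgi : i ≤ g := Nat.le_findGreatest (by omega) hiS
        have hgle : g ≤ k0 - 1 - τ/2 := Nat.findGreatest_le _
        have hgmax : ∀ x, g < x → x ≤ k0 - 1 - τ/2 → x ∉ S := by
          intro x h1 h2 hx
          exact Nat.findGreatest_is_greatest h1 h2 hx
        -- h = next element of S after g
        have hQ : ∃ x, g < x ∧ x ≤ j ∧ x ∈ S := ⟨j, by omega, le_refl j, hjS⟩
        obtain ⟨hhg, hhj, hhS⟩ := Nat.find_spec hQ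
        set h := Nat.find hQ with hhdef
        have hminh : ∀ x, g < x → x < h → x ∉ S := by
          intro x h1 h2 hx
          exact Nat.find_min hQ h2 ⟨h1, by omega, hx⟩
        have hhbig : k0 - 1 - τ/2 < h := by
          by_contra hc
          exact hgmax h hhg (by omega) hhS
        rcases Nat.lt_or_ge h k0 with hcase | hcase
        · -- h is strictly inside (i, j) and before the break: use its removal witness
          obtain ⟨a2, b2, ha2S, hb2S, hab21, hab22, hab23, ha2n, hb2n, M2⟩ :=
            hrem h (by omega) (by omega) hhS
          have ha2i : i ≤ a2 := by
            by_contra hc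
            exact hiR ⟨a2, b2, ha2S, hb2S, by omega, by omega, hab23, ha2n, hb2n, M2⟩
          have ha2g : a2 ≤ g := by
            by_contra hc
            exact hminh a2 (by omega) hab21 ha2S
          set q := b2 - a2 with hq
          have hq1 : 1 ≤ q := by omega
          have E1 : s k0 = s (k0 - q) := by
            have h := (M2 (k0 - b2) (show k0 - b2 ≤ τ/2 by omega)).symm
            rw [show b2 + (k0 - b2) = k0 by omega,
              show a2 + (k0 - b2) = k0 - q by omega] at h
            exact h
          have E2 : s (k0 - q) = s (k0 - p - q) := by
            have h := perE (k0 - q) (by omega) (by omega)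
            rw [show k0 - q - p = k0 - p - q by omega] at h
            exact h
          have E3 : s (k0 - p) = s (k0 - p - q) := by
            have h := (M2 (k0 - p - b2) (show k0 - p - b2 ≤ τ/2 by omega)).symm
            rw [show b2 + (k0 - p - b2) = k0 - p by omega,
              show a2 + (k0 - p - b2) = k0 - p - q by omega] at h
            exact h
          exact hk03 (by rw [E1, E2, ← E3])
        · -- a long gap in S covering the break: use density of S
          obtain ⟨r, hr, hr1, hr2, perR⟩ := hSc g h hgS hhS (by omega) hminh
          have E1 : s k0 = s (k0 - r) := perR k0 (by omega) (by omega)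
          have E2 : s (k0 - r) = s (k0 - p - r) := by
            have h := perE (k0 - r) (by omega) (by omega)
            rw [show k0 - r - p = k0 - p - r by omega] at h
            exact h
          have E3 : s (k0 - p) = s (k0 - p - r) := perR (k0 - p) (by omega) (by omega)
          exact hk03 (by rw [E1, E2, ← E3])
      · -- no breakpoint: p is a period of s[i..j]
        push_neg at hbk
        exact ⟨p, by omega, hp1, by omega, fun k h1 h2 => hbk k h1 h2⟩
    · -- no element of S strictly inside: use density of S directly
      obtain ⟨r, hr, hper⟩ := hSc i j hiS hjS (by omega)
        (fun x h1 h2 hx => hmid ⟨x, h1, h2, hx⟩)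
      exact ⟨r, by omega, hper⟩
end

section
/- Let s be a string of length n, let τ be a positive multiple of 8 with τ ≤ n/2, and let S be a (τ/2)-partitioning set of s. Define S' to be the set S from which we exclude all positions h ∈ S for which there exist i, j ∈ S with i < h ≤ j, j − i ≤ τ/4, j + τ/2 < n, i + τ/2 < n, and s[i..i+τ/2] = s[j..j+τ/2]. Then the following converse of property (c) holds for S': if a substring s[i..j] has a period at most τ/4, then S' ∩ [i + 3τ/4 .. j − 3τ/4] = ∅. -/
/-- Converse of property (c) for the refined set `S'`: if `τ` is a positive
multiple of `8` with `τ ≤ n/2` and `S` is a `(τ/2)`-partitioning set of `s`,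
then whenever a substring `s[i..j]` has a period at most `τ/4`, the refined set
`S'` contains no position in `[i + 3τ/4 .. j − 3τ/4]`. -/
theorem stmt7 {α : Type*} (s : ℕ → α) (n τ : ℕ) (S : Set ℕ)
    (hpos : 0 < τ) (hmul : τ % 8 = 0) (hn : 2 * τ ≤ n)
    (hS : IsPartitioning s n (τ / 2) S) :
    ∀ i j, i ≤ j → j < n → (∃ p, p ≤ τ / 4 ∧ PeriodOf s i j p) →
      ∀ k ∈ Refine s n τ S, ¬ (i + 3 * τ / 4 ≤ k ∧ k + 3 * τ / 4 ≤ j) := by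
  obtain ⟨hSn, ha, hb, hc⟩ := hS
  rintro i j hij hjn ⟨p, hp, hp1, hp2, hper⟩ k ⟨hkS, hkR⟩ ⟨h1, h2⟩
  obtain ⟨M, rfl⟩ : ∃ M, τ = 8 * M := ⟨τ / 8, by omega⟩
  have hM0 : 0 < M := by omega
  rw [show 3 * (8 * M) / 4 = 6 * M by omega] at h1 h2
  rw [show 8 * M / 4 = 2 * M by omega] at hp
  -- k - p ∈ S by local consistency
  have hkp : k - p ∈ S := by
    have key := ha k (k - p) (by omega) (by omega) (by omega) (by omega) ?_
    · exact key.mp hkS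
    · intro d hd
      have hd' : d ≤ 8 * M := by omega
      have hm := hper (k - 8 * M / 2 + d) (by omega) (by omega)
      rw [hm]
      congr 1
      omega
  -- the pair (k - p, k) shows k is Removed
  exact hkR ⟨k - p, k, hkp, hkS, by omega, le_refl k, by omega, by omega, by omega,
    fun d hd => by
      have hd' : d ≤ 4 * M := by omega
      have hm := hper (k + d) (by omega) (by omega)
      rw [hm]
      congr 1
      omega⟩
end

section
/- Let s be a string of length n, let τ be a positive multiple of 8 with τ ≤ n/2, and let S be a (τ/2)-partitioning set of s. Define S' to be the set S from which we exclude all positions h ∈ S for which there exist i, j ∈ S with i < h ≤ j, j − i ≤ τ/4, j + τ/2 < n, i + τ/2 < n, and s[i..i+τ/2] = s[j..j+τ/2]. Then S' satisfies properties (a) and (b) of a partitioning set with 3τ/4 in place of τ: (a) whenever 3τ/4 ≤ p, q and p, q < n − 3τ/4 and s[p−3τ/4..p+3τ/4] = s[q−3τ/4..q+3τ/4], then p ∈ S' iff q ∈ S'; (b) whenever p, q ∈ S', ℓ ≥ 0, p+ℓ < n, q+ℓ < n and s[p..p+ℓ] = s[q..q+ℓ], then for each d with 0 ≤ d < ℓ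 − 3τ/4, p+d ∈ S' iff q+d ∈ S'. -/
/-- Transfer of `Removed` across matching windows of radius `6m` (for (a)). -/
lemma removed_transfer_a {α : Type*} (s : ℕ → α) (n m : ℕ) (hm : 0 < m) (S : Set ℕ)
    (hS : IsPartitioning s n (4 * m) S) (p q : ℕ)
    (hp1 : 6 * m ≤ p) (hp2 : p + 6 * m < n) (hq1 : 6 * m ≤ q) (hq2 : q + 6 * m < n)
    (hw : ∀ d, d ≤ 12 * m → s (p - 6 * m + d) = s (q - 6 * m + d)) :
    Removed s n (8 * m) S p → Removed s n (8 * m) S q := by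
  rintro ⟨i, j, hiS, hjS, hip, hpj, hji, hin, hjn, hmatch⟩
  have hji' : j - i ≤ 2 * m := by omega
  have hin' : i + 4 * m < n := by omega
  have hjn' : j + 4 * m < n := by omega
  have hmatch' : ∀ d, d ≤ 4 * m → s (i + d) = s (j + d) := fun d hd => hmatch d (by omega)
  have hilb : p ≤ i + 2 * m := by omega
  set i' := q - (p - i) with hi'
  set j' := q + (j - p) with hj'
  have hi'S : i' ∈ S := by
    refine (hS.2.1 i i' (by omega) (by omega) (by omega) (by omega) ?_).mp hiS
    intro d hd
    have key := hw (i + 2 * m + d - p) (by omega)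
    rw [show p - 6 * m + (i + 2 * m + d - p) = i - 4 * m + d by omega,
        show q - 6 * m + (i + 2 * m + d - p) = i' - 4 * m + d by omega] at key
    exact key
  have hj'S : j' ∈ S := by
    refine (hS.2.1 j j' (by omega) (by omega) (by omega) (by omega) ?_).mp hjS
    intro d hd
    have key := hw (j + 2 * m + d - p) (by omega)
    rw [show p - 6 * m + (j + 2 * m + d - p) = j - 4 * m + d by omega,
        show q - 6 * m + (j + 2 * m + d - p) = j' - 4 * m + d by omega] at key
    exact key
  refine ⟨i', j', hi'S, hj'S, by omega, by omega, by omega, by omega, by omega, ?_⟩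
  intro d hd
  have hd4 : d ≤ 4 * m := by omega
  have a1 : i' + d = q - 6 * m + (i + 6 * m + d - p) := by omega
  have a2 : i + d = p - 6 * m + (i + 6 * m + d - p) := by omega
  have a3 : j + d = p - 6 * m + (j + 6 * m + d - p) := by omega
  have a4 : j' + d = q - 6 * m + (j + 6 * m + d - p) := by omega
  rw [a1, a4, ← hw _ (by omega : i + 6 * m + d - p ≤ 12 * m),
      ← hw _ (by omega : j + 6 * m + d - p ≤ 12 * m), ← a2, ← a3]
  exact hmatch' d hd4

/-- Transfer of `Removed` across matching extensions (for (b)). -/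
lemma removed_transfer_b {α : Type*} (s : ℕ → α) (n m : ℕ) (hm : 0 < m) (S : Set ℕ)
    (hS : IsPartitioning s n (4 * m) S) (p q ℓ : ℕ)
    (hpS : p ∈ S) (hqS : q ∈ S) (hpNR : ¬ Removed s n (8 * m) S p)
    (hpl : p + ℓ < n) (hql : q + ℓ < n)
    (hw : ∀ d, d ≤ ℓ → s (p + d) = s (q + d)) (d : ℕ) (hd : d < ℓ - 6 * m) :
    Removed s n (8 * m) S (p + d) → Removed s n (8 * m) S (q + d) := by
  rintro ⟨i, j, hiS, hjS, hip, hpj, hji, hin, hjn, hmatch⟩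
  have hji' : j - i ≤ 2 * m := by omega
  have hin' : i + 4 * m < n := by omega
  have hjn' : j + 4 * m < n := by omega
  have hℓ : 6 * m + d < ℓ := by omega
  by_cases hcase : p ≤ i
  · have hi'S : q + (i - p) ∈ S := by
      have := (hS.2.2.1 p q ℓ hpS hqS hpl hql hw (i - p) (by omega)).mp
      rw [show p + (i - p) = i by omega] at this
      exact this hiS
    have hj'S : q + (j - p) ∈ S := by
      have := (hS.2.2.1 p q ℓ hpS hqS hpl hql hw (j - p) (by omega)).mp
      rw [show p + (j - p) = j by omega] at this
      exact this hjS
    refine ⟨q + (i - p), q + (j - p), hi'S, hj'S, by omega, by omega, by omega,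
      by omega, by omega, ?_⟩
    intro e he
    have he4 : e ≤ 4 * m := by omega
    rw [show q + (i - p) + e = q + (i - p + e) by omega,
        show q + (j - p) + e = q + (j - p + e) by omega,
        ← hw (i - p + e) (by omega), ← hw (j - p + e) (by omega),
        show p + (i - p + e) = i + e by omega, show p + (j - p + e) = j + e by omega]
    exact hmatch e (by omega)
  · exact absurd ⟨i, j, hiS, hjS, by omega, by omega, by omega, by omega, by omega,
      fun e he => hmatch e (by omega)⟩ hpNR

/-- The refined set `S'` satisfies properties (a) and (b) of a partitioning set
with `3τ/4` in place of `τ`. -/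
theorem stmt8 {α : Type*} (s : ℕ → α) (n τ : ℕ) (S : Set ℕ)
    (hpos : 0 < τ) (hmul : τ % 8 = 0) (hn : 2 * τ ≤ n)
    (hS : IsPartitioning s n (τ / 2) S) :
    -- (a) with 3τ/4
    (∀ p q, 3 * τ / 4 ≤ p → p + 3 * τ / 4 < n → 3 * τ / 4 ≤ q → q + 3 * τ / 4 < n →
        (∀ d, d ≤ 2 * (3 * τ / 4) →
          s (p - 3 * τ / 4 + d) = s (q - 3 * τ / 4 + d)) →
        (p ∈ Refine s n τ S ↔ q ∈ Refine s n τ S)) ∧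
    -- (b) with 3τ/4
    (∀ p q ℓ, p ∈ Refine s n τ S → q ∈ Refine s n τ S → p + ℓ < n → q + ℓ < n →
        (∀ d, d ≤ ℓ → s (p + d) = s (q + d)) →
        ∀ d, d < ℓ - 3 * τ / 4 →
          (p + d ∈ Refine s n τ S ↔ q + d ∈ Refine s n τ S)) := by
  obtain ⟨m, rfl⟩ : ∃ m, τ = 8 * m := ⟨τ / 8, by omega⟩
  have hm : 0 < m := by omega
  rw [show 8 * m / 2 = 4 * m by omega] at hS
  rw [show 3 * (8 * m) / 4 = 6 * m by omega]
  have hmem : ∀ x, x ∈ Refine s n (8 * m) S ↔ x ∈ S ∧ ¬ Removed s n (8 * m) S x :=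
    fun x => Iff.rfl
  constructor
  · intro p q hp1 hp2 hq1 hq2 hw
    have hw' : ∀ d, d ≤ 12 * m → s (p - 6 * m + d) = s (q - 6 * m + d) :=
      fun d hd => hw d (by omega)
    have hPQ : p ∈ S ↔ q ∈ S := by
      refine hS.2.1 p q (by omega) (by omega) (by omega) (by omega) ?_
      intro d hd
      have key := hw' (2 * m + d) (by omega)
      rw [show p - 6 * m + (2 * m + d) = p - 4 * m + d by omega,
          show q - 6 * m + (2 * m + d) = q - 4 * m + d by omega] at key
      exact key
    have hR1 := removed_transfer_a s n m hm S hS p q hp1 hp2 hq1 hq2 hw'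
    have hR2 := removed_transfer_a s n m hm S hS q p hq1 hq2 hp1 hp2
      (fun d hd => (hw' d hd).symm)
    rw [hmem p, hmem q]
    constructor
    · rintro ⟨h1, h2⟩; exact ⟨hPQ.mp h1, fun h => h2 (hR2 h)⟩
    · rintro ⟨h1, h2⟩; exact ⟨hPQ.mpr h1, fun h => h2 (hR1 h)⟩
  · intro p q ℓ hp hq hpl hql hw d hd
    obtain ⟨hpS, hpNR⟩ := (hmem p).mp hp
    obtain ⟨hqS, hqNR⟩ := (hmem q).mp hq
    have hPQ : p + d ∈ S ↔ q + d ∈ S :=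
      hS.2.2.1 p q ℓ hpS hqS hpl hql hw d (by omega)
    have hR1 := removed_transfer_b s n m hm S hS p q ℓ hpS hqS hpNR hpl hql hw d hd
    have hR2 := removed_transfer_b s n m hm S hS q p ℓ hqS hpS hqNR hql hpl
      (fun e he => (hw e he).symm) d hd
    rw [hmem (p + d), hmem (q + d)]
    constructor
    · rintro ⟨h1, h2⟩; exact ⟨hPQ.mp h1, fun h => h2 (hR2 h)⟩
    · rintro ⟨h1, h2⟩; exact ⟨hPQ.mpr h1, fun h => h2 (hR1 h)⟩
end

section
/- Let s be a string of length n, let P ≥ 1, and let [a_1..b_1], [a_2..b_2], …, [a_m..b_m] be intervals with 0 ≤ a_1 ≤ a_2 ≤ ⋯ ≤ a_m, b_1 ≤ b_2 ≤ ⋯ ≤ b_m < n, and a_t ≤ b_t for all t. Suppose each substring s[a_t..b_t] has a period at most P and, for each t ∈ [1..m), b_t − a_{t+1} > 2P. Then the substring s[a_1..b_m] has a period at most P. -/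
/-- Fine–Wilf on an interval, assuming `p ≤ q`. -/
lemma fw_aux {α : Type*} (s : ℕ → α) (pq : ℕ) :
    ∀ p q i j, p + q = pq → 1 ≤ p → p ≤ q → i + p + q ≤ j + 1 →
    (∀ k, i + p ≤ k → k ≤ j → s k = s (k - p)) →
    (∀ k, i + q ≤ k → k ≤ j → s k = s (k - q)) →
    ∀ k, i + Nat.gcd p q ≤ k → k ≤ j → s k = s (k - Nat.gcd p q) := by
  induction pq using Nat.strong_induction_on with
  | _ pq ih =>
    intro p q i j hpq hp hple hlen hP hQ
    rcases eq_or_lt_of_le hple with heq | hlt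
    · subst heq
      rw [Nat.gcd_self]
      exact hP
    · set g := Nat.gcd p q with hg
      have hgp : g ∣ p := Nat.gcd_dvd_left p q
      have hgq : g ∣ q := Nat.gcd_dvd_right p q
      have hg1 : 1 ≤ g := Nat.pos_of_ne_zero (by
        intro h
        have := (Nat.gcd_eq_zero_iff.mp h).1
        omega)
      have hgr : g ∣ q - p := Nat.dvd_sub hgq hgp
      have hq' : p + g ≤ q := by
        have := Nat.le_of_dvd (by omega) hgr
        omega
      set r := q - p with hr
      have hr1 : 1 ≤ r := by omega
      have hjp : p ≤ j := by omega
      -- period r on [i, j - p]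
      have hR : ∀ k, i + r ≤ k → k ≤ j - p → s k = s (k - r) := by
        intro k h1 h2
        have e1 : s (k + p) = s k := by
          have := hP (k + p) (by omega) (by omega)
          rwa [show k + p - p = k from by omega] at this
        have e2 : s (k + p) = s (k - r) := by
          have := hQ (k + p) (by omega) (by omega)
          rwa [show k + p - q = k - r from by omega] at this
        exact e1.symm.trans e2
      -- period p on [i, j - p]
      have hP' : ∀ k, i + p ≤ k → k ≤ j - p → s k = s (k - p) := by
        intro k h1 h2; exact hP k h1 (by omega)
      -- gcd period on prefix [i, j - p] by induction
      have pre : ∀ k, i + g ≤ k → k ≤ j - p → s k = s (k - g) := by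
        rcases le_total p r with hpr | hrp
        · have := ih (p + r) (by omega) p r i (j - p) rfl hp hpr (by omega) hP' hR
          have e : Nat.gcd p r = g := by
            rw [hg, hr, Nat.gcd_comm p (q - p), Nat.gcd_sub_self_left hple,
              Nat.gcd_comm]
          rwa [e] at this
        · have := ih (r + p) (by omega) r p i (j - p) rfl hr1 hrp (by omega) hR hP'
          have e : Nat.gcd r p = g := by
            rw [hg, hr, Nat.gcd_sub_self_left hple, Nat.gcd_comm]
          rwa [e] at this
      -- extend to [i, j]
      intro k
      induction k using Nat.strong_induction_on with
      | _ k ihk =>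
        intro h1 h2
        rcases le_or_gt k (j - p) with hk | hk
        · exact pre k h1 hk
        · have hk1 : i + p + g ≤ k := by omega
          have e1 := hP k (by omega) h2
          have e2 := ihk (k - p) (by omega) (by omega) (by omega)
          have e3 := hP (k - g) (by omega) (by omega)
          rw [show k - p - g = k - g - p from by omega] at e2
          exact (e1.trans e2).trans e3.symm

/-- Fine–Wilf on an interval. -/
lemma fw {α : Type*} (s : ℕ → α) (p q i j : ℕ) (hp : 1 ≤ p) (hq : 1 ≤ q)
    (hlen : i + p + q ≤ j + 1)
    (hP : ∀ k, i + p ≤ k → k ≤ j → s k = s (k - p))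
    (hQ : ∀ k, i + q ≤ k → k ≤ j → s k = s (k - q)) :
    ∀ k, i + Nat.gcd p q ≤ k → k ≤ j → s k = s (k - Nat.gcd p q) := by
  rcases le_total p q with h | h
  · exact fw_aux s (p + q) p q i j rfl hp h hlen hP hQ
  · have := fw_aux s (q + p) q p i j rfl hq h (by omega) hQ hP
    rwa [Nat.gcd_comm] at this

/-- Combining step: periods on `[A,B]` and `[a',b']` with big overlap give a
period on `[A,b']`. -/
lemma step_lemma {α : Type*} (s : ℕ → α) (P A B a' b' p q : ℕ)
    (hpP : p ≤ P) (hqP : q ≤ P) (hp : 1 ≤ p) (hq : 1 ≤ q)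
    (hAa : A ≤ a') (hBb : B ≤ b')
    (hov : a' + 2 * P < B)
    (hper1 : ∀ k, A + p ≤ k → k ≤ B → s k = s (k - p))
    (hper2 : ∀ k, a' + q ≤ k → k ≤ b' → s k = s (k - q)) :
    ∀ k, A + Nat.gcd p q ≤ k → k ≤ b' → s k = s (k - Nat.gcd p q) := by
  set g := Nat.gcd p q with hg
  have hgp : g ≤ p := Nat.le_of_dvd hp (Nat.gcd_dvd_left p q)
  have hgq : g ≤ q := Nat.le_of_dvd hq (Nat.gcd_dvd_right p q)
  have hg1 : 1 ≤ g := Nat.pos_of_ne_zero (by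
    intro h
    have := (Nat.gcd_eq_zero_iff.mp h).1
    omega)
  -- gcd is a period on the overlap [a', B]
  have hovp : ∀ k, a' + g ≤ k → k ≤ B → s k = s (k - g) :=
    fw s p q a' B hp hq (by omega)
      (fun k h1 h2 => hper1 k (by omega) h2)
      (fun k h1 h2 => hper2 k h1 (by omega))
  -- extend leftward to [A, B]
  have left : ∀ k, A + g ≤ k → k ≤ B → s k = s (k - g) := by
    suffices h : ∀ d k, B - k ≤ d → A + g ≤ k → k ≤ B → s k = s (k - g) from
      fun k h1 h2 => h (B - k) k le_rfl h1 h2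
    intro d
    induction d with
    | zero =>
      intro k hd h1 h2
      exact hovp k (by omega) h2
    | succ d ihd =>
      intro k hd h1 h2
      rcases le_or_gt (a' + g) k with hk | hk
      · exact hovp k hk h2
      · have hkp : k + p ≤ B := by omega
        have e1 : s (k + p) = s k := by
          have := hper1 (k + p) (by omega) hkp
          rwa [show k + p - p = k from by omega] at this
        have e2 : s (k + p) = s (k + p - g) := ihd (k + p) (by omega) (by omega) hkp
        have e3 : s (k - g + p) = s (k - g) := by
          have := hper1 (k - g + p) (by omega) (by omega)
          rwa [show k - g + p - p = k - g from by omega] at this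
        rw [show k + p - g = k - g + p from by omega] at e2
        exact e1.symm.trans (e2.trans e3)
  -- extend rightward to [a', b']
  have right : ∀ k, a' + g ≤ k → k ≤ b' → s k = s (k - g) := by
    intro k
    induction k using Nat.strong_induction_on with
    | _ k ihk =>
      intro h1 h2
      rcases le_or_gt k B with hk | hk
      · exact hovp k h1 hk
      · have e1 := hper2 k (by omega) h2
        have e2 := ihk (k - q) (by omega) (by omega) (by omega)
        have e3 := hper2 (k - g) (by omega) (by omega)
        rw [show k - q - g = k - g - q from by omega] at e2
        exact (e1.trans e2).trans e3.symm
  -- union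
  intro k h1 h2
  rcases le_or_gt k B with hk | hk
  · exact left k h1 hk
  · exact right k (by omega) h2

/-- If interleaving intervals `[a₁..b₁], …, [a_m..b_m]` (with `a` and `b`
nondecreasing) each carry a period at most `P` and adjacent intervals overlap on
more than `2P` letters (`b_t − a_{t+1} > 2P`), then `s[a₁..b_m]` has a period at
most `P`. -/
theorem stmt10 {α : Type*} (s : ℕ → α) (n P m : ℕ) (hP : 1 ≤ P) (hm : 1 ≤ m)
    (a b : ℕ → ℕ)
    (hamono : ∀ t, 1 ≤ t → t < m → a t ≤ a (t + 1))
    (hbmono : ∀ t, 1 ≤ t → t < m → b t ≤ b (t + 1))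
    (hab : ∀ t, 1 ≤ t → t ≤ m → a t ≤ b t)
    (hbn : b m < n)
    (hper : ∀ t, 1 ≤ t → t ≤ m → ∃ p, p ≤ P ∧ PeriodOf s (a t) (b t) p)
    (hover : ∀ t, 1 ≤ t → t < m → a (t + 1) + 2 * P < b t) :
    ∃ p, p ≤ P ∧ PeriodOf s (a 1) (b m) p := by
  have ha1 : ∀ t, 1 ≤ t → t ≤ m → a 1 ≤ a t := by
    intro t ht
    induction t, ht using Nat.le_induction with
    | base => intro _; exact le_rfl
    | succ t ht ih => intro h; exact (ih (by omega)).trans (hamono t ht (by omega))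
  have main : ∀ t, 1 ≤ t → t ≤ m → ∃ p, p ≤ P ∧ PeriodOf s (a 1) (b t) p := by
    intro t ht
    induction t, ht using Nat.le_induction with
    | base => intro _; exact hper 1 le_rfl hm
    | succ t ht ih =>
      intro h
      obtain ⟨p, hpP, hp1, hplen, hp⟩ := ih (by omega)
      obtain ⟨q, hqP, hq1, hqlen, hq⟩ := hper (t + 1) (by omega) h
      have hov := hover t ht (by omega)
      have hbb := hbmono t ht (by omega)
      have haa := ha1 (t + 1) (by omega) h
      have hgp : Nat.gcd p q ≤ p := Nat.le_of_dvd hp1 (Nat.gcd_dvd_left p q)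
      have hg1 : 1 ≤ Nat.gcd p q := Nat.pos_of_ne_zero (by
        intro hz
        have := (Nat.gcd_eq_zero_iff.mp hz).1
        omega)
      refine ⟨Nat.gcd p q, hgp.trans hpP, hg1, by omega, ?_⟩
      exact step_lemma s P (a 1) (b t) (a (t + 1)) (b (t + 1)) p q hpP hqP hp1 hq1
        haa hbb hov hp hq
  exact main m hm le_rfl
end

section
/- Let s be a string of length n, let τ be an integer with 4 ≤ τ ≤ n/2, and let S be a τ-partitioning set of s. Let p and q be positions with p + 3τ < n and q + 3τ < n such that s[p..p+3τ] = s[q..q+3τ]. Suppose there exists p' ∈ S with p + τ ≤ p' ≤ p + 2τ and no element of S lying in [p+τ..p'). Then q + (p' − p) ∈ S, and no element of S lies in [q+τ..q+(p'−p)); in other words, the first position of S at distance at least τ to the right of q is q + (p' − p). -/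
/-- Forward synchronization: if `s[p..p+3τ] = s[q..q+3τ]` and `p'` is the first
position of the `τ`-partitioning set `S` with `p + τ ≤ p' ≤ p + 2τ`, then
`q + (p' - p)` is in `S` and is the first position of `S` at distance at least
`τ` to the right of `q`. -/
theorem stmt11 {α : Type*} (s : ℕ → α) (n τ : ℕ) (S : Set ℕ)
    (h4 : 4 ≤ τ) (hn : 2 * τ ≤ n) (hS : IsPartitioning s n τ S)
    (p q p' : ℕ) (hpn : p + 3 * τ < n) (hqn : q + 3 * τ < n)
    (heq : ∀ d, d ≤ 3 * τ → s (p + d) = s (q + d))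
    (hp'S : p' ∈ S) (hp'lo : p + τ ≤ p') (hp'hi : p' ≤ p + 2 * τ)
    (hfirst : ∀ k ∈ S, p + τ ≤ k → ¬ k < p') :
    q + (p' - p) ∈ S ∧ ∀ k ∈ S, q + τ ≤ k → ¬ k < q + (p' - p) := by
  obtain ⟨hbound, ha, hb, hc⟩ := hS
  have key : ∀ d, τ ≤ d → d ≤ 2 * τ → (p + d ∈ S ↔ q + d ∈ S) := by
    intro d hd1 hd2
    apply ha (p + d) (q + d) (by omega) (by omega) (by omega) (by omega)
    intro e he
    have h1 : p + d - τ + e = p + (d - τ + e) := by omega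
    have h2 : q + d - τ + e = q + (d - τ + e) := by omega
    rw [h1, h2]
    exact heq _ (by omega)
  constructor
  · have h := (key (p' - p) (by omega) (by omega)).mp
    have hp : p + (p' - p) = p' := by omega
    rw [hp] at h
    exact h hp'S
  · intro k hk hk1 hk2
    have hd : k = q + (k - q) := by omega
    have h := (key (k - q) (by omega) (by omega)).mpr (by rw [← hd]; exact hk)
    exact hfirst _ h (by omega) (by omega)
end

section
/- Let s be a string of length n, let τ be an integer with 4 ≤ τ ≤ n/2, and let S be a τ-partitioning set of s. Let i, j ∈ S with no element of S strictly between i and j, and suppose j + τ < n. Let p be a positive integer with p ≤ τ/4 such that p is a period of s[i..j] and j − i ≥ τ + p. Then the period p breaks within τ positions after j: there exists t with j < t ≤ j + τ such that s[t] ≠ s[t−p]. -/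
/-- If `i, j` are adjacent positions of a `τ`-partitioning set `S`, `p ≤ τ/4` is
a period of `s[i..j]` with `j − i ≥ τ + p`, and `j + τ < n`, then the period `p`
breaks within `τ` positions after `j`: there is `t` with `j < t ≤ j + τ` and
`s[t] ≠ s[t−p]`. -/
theorem stmt12 {α : Type*} (s : ℕ → α) (n τ : ℕ) (S : Set ℕ)
    (h4 : 4 ≤ τ) (hn : 2 * τ ≤ n) (hS : IsPartitioning s n τ S)
    (i j p : ℕ) (hiS : i ∈ S) (hjS : j ∈ S)
    (hadj : ∀ h, i < h → h < j → h ∉ S)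
    (hjn : j + τ < n) (hp1 : 1 ≤ p) (hp4 : p ≤ τ / 4)
    (hper : PeriodOf s i j p) (hlen : τ + p ≤ j - i) :
    ∃ t, j < t ∧ t ≤ j + τ ∧ s t ≠ s (t - p) := by
  obtain ⟨hbound, ha, hb, hc⟩ := hS
  by_contra hcon
  push_neg at hcon
  have hij : i + τ + p ≤ j := by omega
  have hext : ∀ k, i + p ≤ k → k ≤ j + τ → s k = s (k - p) := by
    intro k hk1 hk2
    by_cases hk : k ≤ j
    · exact hper.2.2 k hk1 hk
    · exact hcon k (by omega) (by omega)
  have key := ha (j - p) j (by omega) (by omega) (by omega) hjn ?_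
  · exact absurd (key.mpr hjS) (hadj (j - p) (by omega) (by omega))
  · intro d hd
    have h1 : j - p - τ + d = j - τ + d - p := by omega
    rw [h1]
    exact (hext (j - τ + d) (by omega) (by omega)).symm
end

section
/- Let u and v be strings (finite sequences over an arbitrary alphabet) such that u has a period π ≥ 1, v has a period ρ ≥ 1, and u and v have a common prefix of length at least π + ρ. Then u and v agree on their first min(|u|, |v|) letters: u[k] = v[k] for all 0 ≤ k < min(|u|, |v|). -/
/-- If a string `u` (of length `nu`) has period `π`, a string `v` (of length
`nv`) has period `ρ`, and they share a common prefix of length at least `π + ρ`,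
then they agree on their first `min nu nv` letters. -/
theorem stmt14 {α : Type*} (u v : ℕ → α) (nu nv π ρ L : ℕ)
    (hπ1 : 1 ≤ π) (hπnu : π ≤ nu)
    (hπper : ∀ k, π ≤ k → k < nu → u k = u (k - π))
    (hρ1 : 1 ≤ ρ) (hρnv : ρ ≤ nv)
    (hρper : ∀ k, ρ ≤ k → k < nv → v k = v (k - ρ))
    (hL : π + ρ ≤ L) (hLmin : L ≤ min nu nv)
    (hpre : ∀ k, k < L → u k = v k) :
    ∀ k, k < min nu nv → u k = v k := by
  intro k
  induction k using Nat.strong_induction_on with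
  | _ k ih =>
    intro hk
    by_cases h : k < L
    · exact hpre k h
    · push_neg at h
      have hπρ : π + ρ ≤ k := le_trans hL h
      have hku : k < nu := lt_of_lt_of_le hk (min_le_left _ _)
      have hkv : k < nv := lt_of_lt_of_le hk (min_le_right _ _)
      have h1 : u k = u (k - π) := hπper k (by omega) hku
      have h2 : u (k - π) = v (k - π) := ih (k - π) (by omega) (by omega)
      have h3 : v (k - π) = v (k - π - ρ) := hρper (k - π) (by omega) (by omega)
      have h4 : v (k - π - ρ) = u (k - π - ρ) := (ih _ (by omega) (by omega)).symm
      have h5 : u (k - ρ) = u (k - ρ - π) := hπper (k - ρ) (by omega) (by omega)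
      have h6 : u (k - ρ) = v (k - ρ) := ih _ (by omega) (by omega)
      have h7 : v k = v (k - ρ) := hρper k (by omega) hkv
      have he : k - π - ρ = k - ρ - π := by omega
      rw [h1, h2, h3, h4, he, ← h5, h6, ← h7]
end
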